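/- arXiv:1903.01002 — 2 statements merged into one kernel-verified Lean document; each statement's English description precedes it below -/
import Mathlib

section
/- Let 2 ≤ r < k and let F' be obtained from a graph F by deleting one vertex. Suppose c > 0 satisfies ex(m, K_{r-1}, F') ≤ c·m for every positive integer m. Then every F-free graph G satisfies N(K_r, G) ≤ (2c/r)·|E(G)|. -/
open scoped Classical

/-- `G` contains a copy of `F`, i.e. a subgraph isomorphic to `F`. -/
def HasCopy {α V : Type*} (F : SimpleGraph α) (G : SimpleGraph V) : Prop :=
  ∃ φ : α ↪ V, ∀ ⦃a b : α⦄, F.Adj a b → G.Adj (φ a) (φ b)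

/-- `N(K_r, G)`: the number of copies of the complete graph `K_r` in `G`,
i.e. the number of `r`-cliques of `G`. -/
noncomputable def cliqueCount {V : Type*} (r : ℕ) (G : SimpleGraph V) : ℕ :=
  {s : Finset V | G.IsNClique r s}.ncard

/-- The number of edges of `G`. -/
noncomputable def edgeCount {V : Type*} (G : SimpleGraph V) : ℕ :=
  G.edgeSet.ncard

/-- The Turán number `ex(n, F)`: the maximum number of edges in an `F`-free graph
on `n` vertices. -/
noncomputable def exTuran {α : Type*} (n : ℕ) (F : SimpleGraph α) : ℕ :=
  sSup {m | ∃ G : SimpleGraph (Fin n), ¬ HasCopy F G ∧ edgeCount G = m}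

/-- The generalized Turán number `ex(n, K_r, F)`: the maximum number of copies of `K_r`
in an `F`-free graph on `n` vertices. -/
noncomputable def exClique {α : Type*} (n r : ℕ) (F : SimpleGraph α) : ℕ :=
  sSup {m | ∃ G : SimpleGraph (Fin n), ¬ HasCopy F G ∧ cliqueCount r G = m}

/-- The hypergraph `H` contains a Berge copy of the graph `F`: there is an injection `φ`
of the vertices of `F` and an injection `f` from the edges of `F` to the hyperedges of `H`
such that `φ '' e ⊆ f e` for every edge `e` of `F`. -/
def HasBergeCopy {α V : Type*} (F : SimpleGraph α) (H : Finset (Finset V)) : Prop :=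
  ∃ (φ : α ↪ V) (f : F.edgeSet → Finset V), Function.Injective f ∧
    ∀ e : F.edgeSet, f e ∈ H ∧ ∀ x ∈ (e : Sym2 α), φ x ∈ f e

/-- `ex_r(n, Berge-F)`: the maximum number of hyperedges in an `r`-uniform
Berge-`F`-free hypergraph on `n` vertices. -/
noncomputable def exBerge {α : Type*} (r n : ℕ) (F : SimpleGraph α) : ℕ :=
  sSup {m | ∃ H : Finset (Finset (Fin n)), (∀ e ∈ H, e.card = r) ∧
    ¬ HasBergeCopy F H ∧ H.card = m}

/-- A hypergraph is linear if any two distinct hyperedges share at most one vertex. -/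
def IsLinear {V : Type*} [DecidableEq V] (H : Finset (Finset V)) : Prop :=
  ∀ e₁ ∈ H, ∀ e₂ ∈ H, e₁ ≠ e₂ → (e₁ ∩ e₂).card ≤ 1

/-- `ex_r^{lin}(n, Berge-F)`: the maximum number of hyperedges in an `r`-uniform linear
Berge-`F`-free hypergraph on `n` vertices. -/
noncomputable def exBergeLin {α : Type*} (r n : ℕ) (F : SimpleGraph α) : ℕ :=
  sSup {m | ∃ H : Finset (Finset (Fin n)), (∀ e ∈ H, e.card = r) ∧ IsLinear H ∧
    ¬ HasBergeCopy F H ∧ H.card = m}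

/-- The graph obtained from `F₀` by subdividing the edge `uv`: delete the edge `uv` and
add a new vertex `none` joined to `u` and `v`. -/
def subdivideEdge {α : Type*} (F₀ : SimpleGraph α) (u v : α) : SimpleGraph (Option α) :=
  SimpleGraph.fromEdgeSet
    ((Sym2.map some '' F₀.edgeSet \ {s(some u, some v)}) ∪ {s(some u, none), s(some v, none)})

/-!
Double count the pairs `(v, K)` with `K` an `r`-clique of `G` through `v`. The `r`-cliques
through `v` correspond to the `(r-1)`-cliques of the neighbourhood of `v`, and the neighbourhood
spans an `F'`-free graph, since a copy of `F'` there extends to a copy of `F` by sending the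
deleted vertex to `v`. So at most `c · deg v` cliques pass through `v`, and summing over `v`
gives `r · N(K_r, G) ≤ c · ∑ deg v = 2c · |E(G)|`.
-/

open Finset SimpleGraph

section

variable {α V W : Type*}

lemma hasCopy_iff_isContained {F : SimpleGraph α} {G : SimpleGraph V} : HasCopy F G ↔ F ⊑ G :=
  ⟨fun ⟨φ, hφ⟩ => ⟨⟨⟨φ, fun h => hφ h⟩, φ.injective⟩⟩,
    fun ⟨f⟩ => ⟨⟨f, f.injective⟩, fun _ _ h => f.toHom.map_adj h⟩⟩

lemma cliqueCount_eq_card_cliqueFinset [Fintype V] [DecidableEq V] (r : ℕ) (G : SimpleGraph V)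
    [DecidableRel G.Adj] : cliqueCount r G = #(G.cliqueFinset r) := by
  rw [cliqueCount, ← Set.ncard_coe_finset, coe_cliqueFinset]
  rfl

lemma edgeCount_eq_card_edgeFinset [Fintype V] (G : SimpleGraph V) [DecidableRel G.Adj] :
    edgeCount G = #G.edgeFinset := by
  rw [edgeCount, ← coe_edgeFinset, Set.ncard_coe_finset]

lemma cliqueCount_le_exClique [Fintype W] (F : SimpleGraph α) (r : ℕ) {H : SimpleGraph W}
    (hH : ¬HasCopy F H) : cliqueCount r H ≤ exClique (Fintype.card W) r F := by
  set e := Fintype.equivFin W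
  have hfree : ¬HasCopy F (H.map e) := by
    rwa [hasCopy_iff_isContained, ← isContained_congr_right (Iso.map e H),
      ← hasCopy_iff_isContained]
  have hcount : cliqueCount r (H.map e) = cliqueCount r H := by
    simp only [cliqueCount_eq_card_cliqueFinset, cliqueFinset_map_of_equiv, card_map]
  refine hcount ▸ le_csSup ?_ ⟨_, hfree, rfl⟩
  exact ((Set.finite_range (cliqueCount r)).subset
    (by rintro _ ⟨K, -, rfl⟩; exact ⟨K, rfl⟩)).bddAbove

lemma cliqueCount_le_mul_card_of_exClique_le [Fintype W] {F : SimpleGraph α} {r : ℕ} {c : ℝ}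
    (hr : r ≠ 0) (hex : ∀ m : ℕ, 0 < m → (exClique m r F : ℝ) ≤ c * m)
    {H : SimpleGraph W} (hH : ¬HasCopy F H) : (cliqueCount r H : ℝ) ≤ c * Fintype.card W := by
  rcases (Fintype.card W).eq_zero_or_pos with hW | hW
  · rw [cliqueCount_eq_card_cliqueFinset, (cliqueFree_of_card_lt (by omega)).cliqueFinset,
      card_empty, hW]
    simp
  · exact (Nat.cast_le.mpr (cliqueCount_le_exClique F r hH)).trans (hex _ hW)

lemma card_cliqueFinset_filter_mem_le [Fintype V] (G : SimpleGraph V) (r : ℕ) (v : V) :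
    #{s ∈ G.cliqueFinset r | v ∈ s} ≤ cliqueCount (r - 1) (G.induce (G.neighborSet v)) := by
  rw [cliqueCount_eq_card_cliqueFinset]
  have hsub :
      ∀ s ∈ {s ∈ G.cliqueFinset r | v ∈ s}, ∀ x ∈ s.erase v, x ∈ G.neighborSet v := by
    intro s hs x hx
    simp only [mem_filter, mem_cliqueFinset_iff] at hs
    exact hs.1.isClique hs.2 (mem_of_mem_erase hx) (ne_of_mem_erase hx).symm
  refine card_le_card_of_injOn (fun s => (s.erase v).subtype (· ∈ G.neighborSet v)) ?_ ?_
  · intro s hs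
    rw [mem_coe, mem_cliqueFinset_iff, isNClique_induce_iff, subtype_map_of_mem (hsub s hs)]
    simp only [coe_filter, mem_cliqueFinset_iff, Set.mem_ofPred_eq] at hs
    exact hs.1.erase_of_mem hs.2
  · intro s hs t ht hst
    have := congrArg (Finset.map (Function.Embedding.subtype _)) hst
    simp only [subtype_map_of_mem (hsub s hs), subtype_map_of_mem (hsub t ht)] at this
    simp only [coe_filter, Set.mem_ofPred_eq] at hs ht
    rw [← insert_erase hs.2, this, insert_erase ht.2]

lemma HasCopy.of_induce_neighborSet {F : SimpleGraph α} {G : SimpleGraph V} (w : α) (v : V)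
    (h : HasCopy (F.induce {x | x ≠ w}) (G.induce (G.neighborSet v))) : HasCopy F G := by
  obtain ⟨φ, hφ⟩ := h
  let ψ : α → V := fun x => if hx : x = w then v else φ ⟨x, hx⟩
  have hψ : ∀ x (hx : x ≠ w), ψ x = φ ⟨x, hx⟩ := fun x hx => dif_neg hx
  have hinj : Function.Injective ψ :=
    Function.Injective.dite (· = w) (f := fun _ => v) (f' := fun x => (φ x : V))
      (fun _ _ _ => Subsingleton.elim _ _) (Subtype.val_injective.comp φ.injective)
      fun {_ _ _ _} => (φ _).2.ne
  suffices hadj : ∀ a b, F.Adj a b → b ≠ w → G.Adj (ψ a) (ψ b) by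
    refine ⟨⟨ψ, hinj⟩, fun a b hab => ?_⟩
    by_cases hb : b = w
    · exact (hadj b a hab.symm (hb ▸ hab.ne)).symm
    · exact hadj a b hab hb
  intro a b hab hb
  by_cases ha : a = w
  · rw [show ψ a = v from dif_pos ha, hψ b hb]
    exact (φ ⟨b, hb⟩).2
  · rw [hψ a ha, hψ b hb]
    exact hφ hab

lemma sum_card_filter_mem_eq_mul_card [Fintype V] [DecidableEq V] {r : ℕ}
    (B : Finset (Finset V)) (hB : ∀ s ∈ B, #s = r) : ∑ v, #{s ∈ B | v ∈ s} = r * #B := by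
  calc ∑ v, #{s ∈ B | v ∈ s} = ∑ s ∈ B, #{v ∈ univ | v ∈ s} :=
        (sum_card_bipartiteAbove_eq_sum_card_bipartiteBelow (fun s v => v ∈ s)).symm
    _ = ∑ s ∈ B, r := sum_congr rfl fun s hs => by rw [filter_mem_eq_inter, univ_inter, hB s hs]
    _ = r * #B := by rw [sum_const, smul_eq_mul, mul_comm]

end

theorem clique_count_le_of_free_general {α V : Type*} [Fintype V] (r : ℕ) (hr : 2 ≤ r)
    (F : SimpleGraph α) (w : α) (c : ℝ)
    (hF' : ∀ m : ℕ, 0 < m →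
      (exClique m (r - 1) (F.induce {x | x ≠ w}) : ℝ) ≤ c * m)
    (G : SimpleGraph V) (hG : ¬ HasCopy F G) :
    (cliqueCount r G : ℝ) ≤ (2 * c / r) * edgeCount G := by
  have hvertex (v : V) : (#{s ∈ G.cliqueFinset r | v ∈ s} : ℝ) ≤ c * G.degree v :=
    calc (#{s ∈ G.cliqueFinset r | v ∈ s} : ℝ)
        ≤ cliqueCount (r - 1) (G.induce (G.neighborSet v)) := by
          exact_mod_cast card_cliqueFinset_filter_mem_le G r v
      _ ≤ c * Fintype.card (G.neighborSet v) :=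
          cliqueCount_le_mul_card_of_exClique_le (by omega) hF'
            fun h => hG (h.of_induce_neighborSet w v)
      _ = c * G.degree v := by rw [card_neighborSet_eq_degree]
  have hcount :
      (r * cliqueCount r G : ℝ) = ∑ v, (#{s ∈ G.cliqueFinset r | v ∈ s} : ℝ) := by
    rw [cliqueCount_eq_card_cliqueFinset]
    exact_mod_cast (sum_card_filter_mem_eq_mul_card (G.cliqueFinset r)
      fun s hs => (mem_cliqueFinset_iff.1 hs).card_eq).symm
  have hdeg : ∑ v, (G.degree v : ℝ) = 2 * edgeCount G := by
    rw [edgeCount_eq_card_edgeFinset]; exact_mod_cast sum_degrees_eq_twice_card_edges G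
  rw [div_mul_eq_mul_div, le_div_iff₀ (by positivity), mul_comm]
  calc (r * cliqueCount r G : ℝ) ≤ ∑ v, c * G.degree v :=
        hcount ▸ sum_le_sum fun v _ => hvertex v
    _ = 2 * c * edgeCount G := by rw [← mul_sum, hdeg]; ring

/-- Let `2 ≤ r < k`, let `F'` be obtained from `F` by deleting a vertex, and
suppose `ex(m, K_{r-1}, F') ≤ c·m` for all `m ≥ 1`. Then every `F`-free graph `G` satisfies
`N(K_r, G) ≤ (2c/r)·|E(G)|`. -/
theorem clique_count_le_of_free {α V : Type*} [Fintype V] (r k : ℕ) (hr : 2 ≤ r) (hk : r < k)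
    (F : SimpleGraph α) (w : α) (c : ℝ) (hc : 0 < c)
    (hF' : ∀ m : ℕ, 0 < m →
      (exClique m (r - 1) (F.induce {x | x ≠ w}) : ℝ) ≤ c * m)
    (G : SimpleGraph V) (hG : ¬ HasCopy F G) :
    (cliqueCount r G : ℝ) ≤ (2 * c / r) * edgeCount G :=
  clique_count_le_of_free_general r hr F w c hF' G hG
end

section
/- Let 2 ≤ r < k. For every n, ex_r(n, Berge-K_k) ≥ N(K_r, T(n, k−1)); indeed, the r-uniform hypergraph on n vertices whose hyperedges are the vertex sets of the copies of K_r in the Turán graph T(n, k−1) contains no Berge copy of K_k. -/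
open scoped Classical

/-
A Berge copy of `F` whose hyperedges are all cliques of `G` is already a copy of `F` in `G`:
the two ends of an edge of `F` lie in a common hyperedge, hence are adjacent in `G`. The
hyperedges of the `r`-clique hypergraph of `T(n, k-1)` are cliques of a `K_k`-free graph, so it
has no Berge copy of `K_k`; being `r`-uniform, it is one of the hypergraphs `exBerge` ranges over.
-/

section

variable {α V : Type*}

theorem HasCopy.isContained {F : SimpleGraph α} {G : SimpleGraph V} (h : HasCopy F G) :
    F.IsContained G :=
  let ⟨φ, hφ⟩ := h
  ⟨⟨⟨φ, fun hab => hφ hab⟩, φ.injective⟩⟩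

theorem HasBergeCopy.hasCopy_of_forall_isClique {F : SimpleGraph α} {G : SimpleGraph V}
    {H : Finset (Finset V)} (hH : ∀ e ∈ H, G.IsClique (e : Set V)) (h : HasBergeCopy F H) :
    HasCopy F G := by
  obtain ⟨φ, f, -, hf⟩ := h
  refine ⟨φ, fun a b hab => ?_⟩
  obtain ⟨hmem, hsub⟩ := hf ⟨s(a, b), hab⟩
  exact hH _ hmem (hsub a (Sym2.mem_mk_left a b)) (hsub b (Sym2.mem_mk_right a b))
    (φ.injective.ne hab.ne)

theorem not_hasBergeCopy_completeGraph_of_cliqueFree {G : SimpleGraph V} {k : ℕ}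
    (hG : G.CliqueFree k) {H : Finset (Finset V)} (hH : ∀ e ∈ H, G.IsClique (e : Set V)) :
    ¬ HasBergeCopy (SimpleGraph.completeGraph (Fin k)) H :=
  fun h => (HasCopy.isContained (h.hasCopy_of_forall_isClique hH)).not_cliqueFree hG

theorem card_le_exBerge {r n : ℕ} {F : SimpleGraph α} {H : Finset (Finset (Fin n))}
    (huniform : ∀ e ∈ H, e.card = r) (hfree : ¬ HasBergeCopy F H) :
    H.card ≤ exBerge r n F := by
  refine le_csSup ⟨Fintype.card (Finset (Fin n)), ?_⟩ ⟨H, huniform, hfree, rfl⟩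
  rintro m ⟨H', -, -, rfl⟩
  exact H'.card_le_univ

theorem cliqueCount_eq_card_filter [Fintype V] (r : ℕ) (G : SimpleGraph V)
    [DecidablePred fun s : Finset V => G.IsNClique r s] :
    cliqueCount r G = (Finset.univ.filter fun s : Finset V => G.IsNClique r s).card := by
  rw [cliqueCount, ← Set.ncard_coe_finset]
  simp only [Finset.coe_filter, Finset.mem_univ, true_and]

end

/-- For `2 ≤ r < k`, the `r`-uniform hypergraph on `n` vertices whose
hyperedges are the vertex sets of copies of `K_r` in the Turán graph `T(n, k-1)` has no Berge
copy of `K_k`; consequently `ex_r(n, Berge-K_k) ≥ N(K_r, T(n, k-1))`. -/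
theorem turan_cliques_berge_free (r k n : ℕ) (hr : 2 ≤ r) (hk : r < k) :
    ¬ HasBergeCopy (SimpleGraph.completeGraph (Fin k))
        (Finset.univ.filter fun s : Finset (Fin n) =>
          (SimpleGraph.turanGraph n (k - 1)).IsNClique r s) ∧
      cliqueCount r (SimpleGraph.turanGraph n (k - 1)) ≤
        exBerge r n (SimpleGraph.completeGraph (Fin k)) := by
  have hturan : (SimpleGraph.turanGraph n (k - 1)).CliqueFree k := by
    simpa only [Nat.sub_add_cancel (by omega : 1 ≤ k)] using
      SimpleGraph.turanGraph_cliqueFree (n := n) (r := k - 1) (by omega)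
  have hclique : ∀ e ∈ Finset.univ.filter fun s : Finset (Fin n) =>
      (SimpleGraph.turanGraph n (k - 1)).IsNClique r s,
      (SimpleGraph.turanGraph n (k - 1)).IsNClique r e :=
    fun e he => (Finset.mem_filter.mp he).2
  have hfree :=
    not_hasBergeCopy_completeGraph_of_cliqueFree hturan fun e he => (hclique e he).isClique
  refine ⟨hfree, ?_⟩
  rw [cliqueCount_eq_card_filter]
  exact card_le_exBerge (fun e he => (hclique e he).card_eq) hfree
end
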